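/- For languages U, V over Σ with ε ∉ U and ε ∉ V, and any ω-word σ ∈ (U* · V)^ω, infinitely many factors of the defining factorization of σ belong to V; consequently (U* · V)^ω ⊆ (U ∪ V)^ω and (U* · V)^ω = ((U ∪ V)* · V)^ω. -/

import Mathlib

open Computability

/-- `l` is a prefix of the ω-word `σ`. -/
def ListPrefixOf {α : Type*} (l : List α) (σ : ℕ → α) : Prop :=
  ∀ k (h : k < l.length), l.get ⟨k, h⟩ = σ k

/-- `σ` is the infinite concatenation of the nonempty finite words `f 0, f 1, f 2, …`. -/
def InfConcat {α : Type*} (f : ℕ → List α) (σ : ℕ → α) : Prop :=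
  (∀ n, f n ≠ []) ∧ ∀ n, ListPrefixOf ((List.ofFn (fun i : Fin n => f i)).flatten) σ

/-- The ω-power `S^ω`: ω-words that are infinite concatenations of words from `S`. -/
def omegaPow {α : Type*} (S : Language α) : Set (ℕ → α) :=
  {σ | ∃ f : ℕ → List α, (∀ n, f n ∈ S) ∧ InfConcat f σ}

/-- The ω-word obtained by prepending the finite word `u` to the ω-word `τ`. -/
def ωAppend {α : Type*} (u : List α) (τ : ℕ → α) : ℕ → α :=
  fun n => if h : n < u.length then u.get ⟨n, h⟩ else τ (n - u.length)

/-- Concatenation `A · L` of a language of finite words with an ω-language. -/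
def catOmega {α : Type*} (A : Language α) (L : Set (ℕ → α)) : Set (ℕ → α) :=
  {σ | ∃ u ∈ A, ∃ τ ∈ L, σ = ωAppend u τ}

/-- A transition-based nondeterministic Büchi automaton. -/
structure NBA (Q α : Type*) where
  Δ : Set (Q × α × Q)
  Q0 : Set Q
  Acc : Set (Q × α × Q)
  acc_sub : Acc ⊆ Δ

namespace NBA

variable {Q α : Type*}

/-- `F̃`: states with at least one outgoing accepting transition. -/
def Ftil (B : NBA Q α) : Set Q := {q | ∃ t y, (q, t, y) ∈ B.Acc}

/-- `p` is a run of the nonempty finite word `w` in `B` from `i` ending upon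
first reaching `j` (i.e. `j` is visited exactly once, at the end). -/
def FinRun (B : NBA Q α) (i j : Q) (w : List α) (p : ℕ → Q) : Prop :=
  p 0 = i ∧ p w.length = j ∧
  (∀ k (h : k < w.length), (p k, w.get ⟨k, h⟩, p (k + 1)) ∈ B.Δ) ∧
  (∀ k, 0 < k → k < w.length → p k ≠ j)

/-- `L_{ij,all}`: nonempty words with a run in `B` from `i` ending upon first reaching `j`. -/
def Lall (B : NBA Q α) (i j : Q) : Language α :=
  {w | w ≠ [] ∧ ∃ p : ℕ → Q, B.FinRun i j w p}

/-- `L_{ij,rej}`: words of `L_{ij,all}` with such a run whose first transition is rejecting. -/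
def Lrej (B : NBA Q α) (i j : Q) : Language α :=
  {w | w ≠ [] ∧ ∃ p : ℕ → Q, B.FinRun i j w p ∧
    ∀ h : 0 < w.length, (p 0, w.get ⟨0, h⟩, p 1) ∉ B.Acc}

/-- `L_{ij,acc}`: words of `L_{ij,all}` with such a run whose first transition is accepting. -/
def Lacc (B : NBA Q α) (i j : Q) : Language α :=
  {w | w ≠ [] ∧ ∃ p : ℕ → Q, B.FinRun i j w p ∧
    ∀ h : 0 < w.length, (p 0, w.get ⟨0, h⟩, p 1) ∈ B.Acc}

/-- `ρ` is a run of the ω-word `σ` in `B`. -/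
def ωRun (B : NBA Q α) (σ : ℕ → α) (ρ : ℕ → Q) : Prop :=
  ρ 0 ∈ B.Q0 ∧ ∀ k, (ρ k, σ k, ρ (k + 1)) ∈ B.Δ

/-- `B` accepts `σ`: some run traverses accepting transitions at infinitely many positions. -/
def Accepts (B : NBA Q α) (σ : ℕ → α) : Prop :=
  ∃ ρ : ℕ → Q, B.ωRun σ ρ ∧ ∀ N, ∃ k ≥ N, (ρ k, σ k, ρ (k + 1)) ∈ B.Acc

end NBA

instance {α : Type*} : Union (Language α) := ⟨fun l m => {w | w ∈ l ∨ w ∈ m}⟩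
instance {α : Type*} : Inter (Language α) := ⟨fun l m => {w | w ∈ l ∧ w ∈ m}⟩
instance {α : Type*} : EmptyCollection (Language α) := ⟨(∅ : Set (List α))⟩

/-!
A factorization of `σ` into factors from `U∗ · V` refines, by splitting every factor into its
`U`-pieces and its final `V`-piece, into a factorization over `U ∪ V` whose `V`-factors end the
old blocks, so infinitely many factors lie in `V`. Conversely, a factorization over `U ∪ V` with
infinitely many `V`-factors regroups into blocks, each cut right after a `V`-factor; every block
is a run of `U`-factors followed by one `V`-factor, i.e. a word of `U∗ · V`. Applying both
directions with `U` and with `U ∪ V` in place of `U` gives the equality of ω-powers.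
-/

section Prefixes

variable {β : Type*}

theorem ofFn_coe_eq_append (f : ℕ → β) {m n : ℕ} (h : m ≤ n) :
    (List.ofFn fun i : Fin n => f i) =
      (List.ofFn fun i : Fin m => f i) ++ List.ofFn fun i : Fin (n - m) => f (m + i) := by
  obtain ⟨d, rfl⟩ := Nat.exists_eq_add_of_le h
  rw [List.ofFn_add]
  simp

theorem ofFn_coe_succ (f : ℕ → β) (n : ℕ) :
    (List.ofFn fun i : Fin (n + 1) => f i) = (List.ofFn fun i : Fin n => f i) ++ [f n] := by
  rw [List.ofFn_succ', List.concat_eq_append]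
  rfl

theorem ofFn_coe_prefix (f : ℕ → β) {m n : ℕ} (h : m ≤ n) :
    (List.ofFn fun i : Fin m => f i) <+: List.ofFn fun i : Fin n => f i :=
  ofFn_coe_eq_append f h ▸ List.prefix_append _ _

theorem le_length_flatten_ofFn {F : ℕ → List β} (hF : ∀ n, F n ≠ []) (n : ℕ) :
    n ≤ (List.ofFn fun i : Fin n => F i).flatten.length := by
  induction n with
  | zero => simp
  | succ n ih =>
    have := List.length_pos_iff.2 (hF n)
    rw [ofFn_coe_succ, List.flatten_append, List.length_append]
    simp only [List.flatten_cons, List.flatten_nil, List.append_nil]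
    omega

theorem ListPrefixOf.of_isPrefix {l l' : List β} {σ : ℕ → β} (h : l' <+: l)
    (hl : ListPrefixOf l σ) : ListPrefixOf l' σ := fun k hk => by
  rw [List.get_eq_getElem, h.getElem hk]
  exact hl k _

end Prefixes

section InfConcat

variable {β : Type*} {σ : ℕ → β}

theorem InfConcat.of_forall_exists_prefix {f g : ℕ → List β} (hf : InfConcat f σ)
    (hg : ∀ n, g n ≠ [])
    (h : ∀ n, ∃ m, (List.ofFn fun i : Fin n => g i).flatten <+:
      (List.ofFn fun i : Fin m => f i).flatten) :
    InfConcat g σ :=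
  ⟨hg, fun n => let ⟨m, hm⟩ := h n; (hf.2 m).of_isPrefix hm⟩

def blocks (g : ℕ → β) (φ : ℕ → ℕ) (n : ℕ) : List β :=
  List.ofFn fun i : Fin (φ (n + 1) - φ n) => g (φ n + i)

theorem flatten_ofFn_blocks (g : ℕ → β) {φ : ℕ → ℕ} (hφ : Monotone φ) (h0 : φ 0 = 0) (n : ℕ) :
    (List.ofFn fun i : Fin n => blocks g φ i).flatten = List.ofFn fun i : Fin (φ n) => g i := by
  induction n with
  | zero => simp [h0]
  | succ n ih =>
    rw [ofFn_coe_succ, List.flatten_append, ih, ofFn_coe_eq_append g (hφ n.le_succ)]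
    simp [blocks]

theorem infConcat_flatten_blocks {g : ℕ → List β} (hg : InfConcat g σ) {φ : ℕ → ℕ}
    (hφ : StrictMono φ) (h0 : φ 0 = 0) : InfConcat (fun n => (blocks g φ n).flatten) σ := by
  refine hg.of_forall_exists_prefix (fun n => ?_) fun n => ⟨φ n, ?_⟩
  · have hmem : g (φ n) ∈ blocks g φ n :=
      List.mem_ofFn.2 ⟨⟨0, Nat.sub_pos_of_lt (hφ n.lt_succ_self)⟩, by simp⟩
    exact fun h => hg.1 _ (List.flatten_eq_nil_iff.1 h _ hmem)
  · rw [← flatten_ofFn_blocks g hφ.monotone h0, List.flatten_flatten, List.map_ofFn]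
    rfl

end InfConcat

section SeqFlatten

variable {β : Type*}

/-- The default `d` is never reached when every `F n` is nonempty. -/
def seqFlatten (F : ℕ → List β) (d : β) (m : ℕ) : β :=
  (List.ofFn fun i : Fin (m + 1) => F i).flatten.getD m d

variable {F : ℕ → List β} (d : β)

theorem seqFlatten_eq_getElem (hF : ∀ n, F n ≠ []) {m n : ℕ}
    (h : m < (List.ofFn fun i : Fin n => F i).flatten.length) :
    seqFlatten F d m = (List.ofFn fun i : Fin n => F i).flatten[m] := by
  have hprefix {a b : ℕ} (hab : a ≤ b) := (ofFn_coe_prefix F hab).flatten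
  rw [seqFlatten, List.getD_eq_getElem _ _ (m.lt_succ_self.trans_le (le_length_flatten_ofFn hF _)),
    (hprefix (le_max_left (m + 1) n)).getElem, (hprefix (le_max_right (m + 1) n)).getElem]

theorem ofFn_seqFlatten (hF : ∀ n, F n ≠ []) (n : ℕ) :
    (List.ofFn fun i : Fin (List.ofFn fun i : Fin n => F i).flatten.length => seqFlatten F d i) =
      (List.ofFn fun i : Fin n => F i).flatten :=
  List.ext_getElem (by simp) fun m h _ => by
    rw [List.getElem_ofFn]
    exact seqFlatten_eq_getElem d hF _

theorem exists_mem_of_seqFlatten (hF : ∀ n, F n ≠ []) (m : ℕ) : ∃ n, seqFlatten F d m ∈ F n := by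
  have h := m.lt_succ_self.trans_le (le_length_flatten_ofFn hF (m + 1))
  obtain ⟨l, hl, hm⟩ := List.mem_flatten.1 (seqFlatten_eq_getElem d hF h ▸ List.getElem_mem h)
  obtain ⟨i, rfl⟩ := List.mem_ofFn.1 hl
  exact ⟨i, hm⟩

theorem exists_seqFlatten_eq_getLast (hF : ∀ n, F n ≠ []) (N : ℕ) :
    ∃ m ≥ N, seqFlatten F d m = (F N).getLast (hF N) := by
  have hP : (List.ofFn fun i : Fin (N + 1) => F i).flatten =
      (List.ofFn fun i : Fin N => F i).flatten ++ F N := by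
    rw [ofFn_coe_succ, List.flatten_append, List.flatten_singleton]
  have hlen := le_length_flatten_ofFn hF (N + 1)
  rw [hP] at hlen
  refine ⟨((List.ofFn fun i : Fin N => F i).flatten ++ F N).length - 1, by omega, ?_⟩
  rw [seqFlatten_eq_getElem d hF (n := N + 1) (by rw [hP]; omega), List.getElem_of_eq hP,
    ← List.getLast_eq_getElem (by simp [hF N])]
  exact List.getLast_append_of_ne_nil _ _

end SeqFlatten

theorem infConcat_seqFlatten {β : Type*} {σ : ℕ → β} {F : ℕ → List (List β)} (d : List β)
    (hσ : InfConcat (fun n => (F n).flatten) σ) (hF : ∀ n, F n ≠ [])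
    (hne : ∀ m, seqFlatten F d m ≠ []) : InfConcat (seqFlatten F d) σ := by
  refine hσ.of_forall_exists_prefix hne fun n => ⟨n, ?_⟩
  have h := (ofFn_coe_prefix (seqFlatten F d) (le_length_flatten_ofFn hF n)).flatten
  rwa [ofFn_seqFlatten d hF, List.flatten_flatten, List.map_ofFn] at h

section CutPoints

variable {p : ℕ → Prop}

noncomputable def cutPoints (p : ℕ → Prop) : ℕ → ℕ
  | 0 => 0
  | k + 1 => Nat.nth p k + 1

theorem cutPoints_le_nth (hp : (Set.ofPred p).Infinite) (k : ℕ) :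
    cutPoints p k ≤ Nat.nth p k := by
  cases k with
  | zero => exact Nat.zero_le _
  | succ k => exact Nat.nth_strictMono hp k.lt_succ_self

theorem cutPoints_strictMono (hp : (Set.ofPred p).Infinite) : StrictMono (cutPoints p) :=
  strictMono_nat_of_lt_succ fun k => (cutPoints_le_nth hp k).trans_lt (Nat.lt_succ_self _)

theorem nth_le_of_cutPoints_le (hp : (Set.ofPred p).Infinite) {k i : ℕ} (hi : cutPoints p k ≤ i)
    (hpi : p i) : Nat.nth p k ≤ i := by
  refine (Nat.isLeast_nth_of_infinite hp k).2 ⟨hpi, fun j hj => ?_⟩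
  cases k with
  | zero => omega
  | succ k => exact (Nat.nth_monotone hp (Nat.le_of_lt_succ hj)).trans_lt hi

theorem blocks_cutPoints {β : Type*} (hp : (Set.ofPred p).Infinite) (g : ℕ → β) (k : ℕ) :
    blocks g (cutPoints p) k =
      (List.ofFn fun i : Fin (Nat.nth p k - cutPoints p k) => g (cutPoints p k + i)) ++
        [g (Nat.nth p k)] := by
  have hk := cutPoints_le_nth hp k
  rw [blocks, show cutPoints p (k + 1) - cutPoints p k = Nat.nth p k - cutPoints p k + 1 by
    change Nat.nth p k + 1 - _ = _; omega, ofFn_coe_succ (fun i => g (cutPoints p k + i))]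
  congr 3
  omega

end CutPoints

section OmegaPower

variable {α : Type*} {U V : Language α} {σ : ℕ → α}

theorem mem_kstar_mul_iff {w : List α} :
    w ∈ U∗ * V ↔ ∃ (L : List (List α)) (b : List α), (∀ x ∈ L, x ∈ U) ∧ b ∈ V ∧
      w = L.flatten ++ b := by
  simp only [Language.mem_mul, Language.mem_kstar]
  constructor
  · rintro ⟨_, ⟨L, rfl, hL⟩, b, hb, rfl⟩
    exact ⟨L, b, hL, hb, rfl⟩
  · rintro ⟨L, b, hL, hb, rfl⟩
    exact ⟨_, ⟨L, rfl, hL⟩, b, hb, rfl⟩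

theorem exists_infConcat_of_mem_omegaPow_kstar_mul (hU : [] ∉ U) (hV : [] ∉ V)
    (hσ : σ ∈ omegaPow (U∗ * V)) :
    ∃ g : ℕ → List α, InfConcat g σ ∧ (∀ n, g n ∈ U ∪ V) ∧ ∀ N, ∃ n ≥ N, g n ∈ V := by
  obtain ⟨f, hf, hfσ⟩ := hσ
  choose L b hL hb hfLb using fun n => mem_kstar_mul_iff.1 (hf n)
  set F : ℕ → List (List α) := fun n => L n ++ [b n]
  have hF : ∀ n, F n ≠ [] := by simp [F]
  have hFmem : ∀ n, ∀ x ∈ F n, x ∈ U ∪ V := by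
    intro n x hx
    rcases List.mem_append.1 hx with hx | hx
    · exact Or.inl (hL n x hx)
    · exact Or.inr (List.mem_singleton.1 hx ▸ hb n)
  have hg : ∀ m, seqFlatten F [] m ∈ U ∪ V := fun m =>
    let ⟨n, hn⟩ := exists_mem_of_seqFlatten [] hF m
    hFmem n _ hn
  have hfF : (fun n => (F n).flatten) = f := funext fun n => by simp [F, hfLb]
  refine ⟨seqFlatten F [], infConcat_seqFlatten [] (hfF ▸ hfσ) hF fun m h => ?_, hg, fun N => ?_⟩
  · exact (h ▸ hg m).elim hU hV
  · obtain ⟨m, hm, hlast⟩ := exists_seqFlatten_eq_getLast [] hF N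
    exact ⟨m, hm, by simpa [hlast, F] using hb N⟩

theorem mem_omegaPow_kstar_mul_of_infConcat {g : ℕ → List α} (hg : InfConcat g σ)
    (hU : ∀ n, g n ∉ V → g n ∈ U) (hV : ∀ N, ∃ n ≥ N, g n ∈ V) :
    σ ∈ omegaPow (U∗ * V) := by
  have hp : {n | g n ∈ V}.Infinite :=
    Nat.frequently_atTop_iff_infinite.1 (Filter.frequently_atTop.2 hV)
  refine ⟨_, fun k => ?_, infConcat_flatten_blocks hg (cutPoints_strictMono hp) rfl⟩
  rw [blocks_cutPoints hp, List.flatten_append, List.flatten_singleton]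
  refine mem_kstar_mul_iff.2 ⟨_, _, fun x hx => ?_, Nat.nth_mem_of_infinite hp k, rfl⟩
  obtain ⟨i, rfl⟩ := List.mem_ofFn.1 hx
  refine hU _ fun hi => ?_
  have := nth_le_of_cutPoints_le hp (Nat.le_add_right _ _) hi
  omega

end OmegaPower

/-- for languages of nonempty words `U, V`, every `σ ∈ (U* · V)^ω` has
a factorization with each factor in `U ∪ V` and infinitely many factors in `V`;
consequently `(U* · V)^ω ⊆ (U ∪ V)^ω` and `(U* · V)^ω = ((U ∪ V)* · V)^ω`. -/
theorem stmt15 {α : Type*} (U V : Language α) (hU : [] ∉ U) (hV : [] ∉ V) :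
    (∀ σ ∈ omegaPow (U∗ * V),
      ∃ f : ℕ → List α, InfConcat f σ ∧ (∀ n, f n ∈ U ∪ V) ∧
        ∀ N, ∃ n ≥ N, f n ∈ V) ∧
    omegaPow (U∗ * V) ⊆ omegaPow (U ∪ V) ∧
    omegaPow (U∗ * V) = omegaPow ((U ∪ V)∗ * V) := by
  have refined σ (hσ : σ ∈ omegaPow (U∗ * V)) :=
    exists_infConcat_of_mem_omegaPow_kstar_mul hU hV hσ
  refine ⟨refined, fun σ hσ => ?_, Set.Subset.antisymm (fun σ hσ => ?_) fun σ hσ => ?_⟩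
  · obtain ⟨g, hg, hUV, -⟩ := refined σ hσ
    exact ⟨g, hUV, hg⟩
  · obtain ⟨g, hg, hUV, hinf⟩ := refined σ hσ
    exact mem_omegaPow_kstar_mul_of_infConcat hg (fun n _ => hUV n) hinf
  · have hUV : [] ∉ U ∪ V := fun h => h.elim hU hV
    obtain ⟨g, hg, hUVV, hinf⟩ := exists_infConcat_of_mem_omegaPow_kstar_mul hUV hV hσ
    exact mem_omegaPow_kstar_mul_of_infConcat hg
      (fun n hn => Or.resolve_right (Or.resolve_right (hUVV n) hn) hn) hinf
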